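/- K'(3 − 2√2) = 2·K(3 − 2√2), where K'(r) = K(√(1−r²)). -/

import Mathlib

open Real Set Filter Topology

/-- Complete elliptic integral of the first kind. -/
noncomputable def EK (r : ℝ) : ℝ :=
  ∫ t in (0:ℝ)..(π/2), 1 / Real.sqrt (1 - r^2 * Real.sin t ^ 2)

/-- Complete elliptic integral of the second kind. -/
noncomputable def EE (r : ℝ) : ℝ :=
  ∫ t in (0:ℝ)..(π/2), Real.sqrt (1 - r^2 * Real.sin t ^ 2)

/-- K'(r) = K(√(1-r²)). -/
noncomputable def EK' (r : ℝ) : ℝ := EK (Real.sqrt (1 - r^2))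

/-- E'(r) = E(√(1-r²)). -/
noncomputable def EE' (r : ℝ) : ℝ := EE (Real.sqrt (1 - r^2))

/-- The function ψ. -/
noncomputable def psi (r : ℝ) : ℝ :=
  2 * (EE r - (1 - r) * EK r) / (EE' r - r * EK' r)

/-!
Landen's transformation `K(2√k / (1 + k)) = (1 + k) K(k)` comes from the substitution
`sin φ = (1 + k) sin θ / (1 + k sin² θ)`, which maps `[0, π/2]` onto itself and satisfies
`dφ / √(1 - g² sin² φ) = (1 + k) dθ / √(1 - k² sin² θ)` with `g = 2√k / (1 + k)`.
For `r = 3 - 2√2` one has `√r = √2 - 1`, so the Landen transform of `r` is `1/√2`, and that of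
`1/√2` is `r' = √(1 - r²)`. Applying the transformation twice gives
`K(r') = (1 + 1/√2)(1 + r) K(r) = 2 K(r)`.
-/

variable {k x : ℝ}

noncomputable def landenSin (k x : ℝ) : ℝ := (1 + k) * sin x / (1 + k * sin x ^ 2)

noncomputable def landenAngle (k x : ℝ) : ℝ := arcsin (landenSin k x)

noncomputable def landenAngleDeriv (k x : ℝ) : ℝ :=
  (1 + k) * (1 - k * sin x ^ 2) / ((1 + k * sin x ^ 2) * √(1 - k ^ 2 * sin x ^ 2))

lemma one_add_mul_sin_sq_pos (hk : 0 ≤ k) (x : ℝ) : 0 < 1 + k * sin x ^ 2 := by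
  positivity

lemma one_sub_mul_sin_sq_pos (hk0 : 0 ≤ k) (hk1 : k < 1) (x : ℝ) : 0 < 1 - k * sin x ^ 2 := by
  nlinarith [sin_sq_le_one x]

lemma one_sub_sq_mul_sin_sq_pos (hk : k ^ 2 < 1) (x : ℝ) : 0 < 1 - k ^ 2 * sin x ^ 2 := by
  nlinarith [sin_sq_le_one x, sq_nonneg (sin x), sq_nonneg k]

lemma continuous_one_div_sqrt_one_sub_sq_mul_sin_sq (hk : k ^ 2 < 1) :
    Continuous fun x => 1 / √(1 - k ^ 2 * sin x ^ 2) :=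
  continuous_const.div (by fun_prop) fun x => (sqrt_pos.2 (one_sub_sq_mul_sin_sq_pos hk x)).ne'

lemma one_sub_landenSin_sq (hk : 0 ≤ k) (x : ℝ) :
    1 - landenSin k x ^ 2 = cos x ^ 2 * (1 - k ^ 2 * sin x ^ 2) / (1 + k * sin x ^ 2) ^ 2 := by
  rw [landenSin, eq_div_iff (by positivity), cos_sq']
  field_simp
  ring

lemma landenSin_sq_le_one (hk0 : 0 ≤ k) (hk1 : k < 1) (x : ℝ) : landenSin k x ^ 2 ≤ 1 := by
  have hQ := one_sub_sq_mul_sin_sq_pos (pow_lt_one₀ hk0 hk1 two_ne_zero) x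
  have : 0 ≤ 1 - landenSin k x ^ 2 := by
    rw [one_sub_landenSin_sq hk0]
    positivity
  linarith

lemma landenSin_sq_lt_one (hk0 : 0 ≤ k) (hk1 : k < 1) (hx : cos x ≠ 0) :
    landenSin k x ^ 2 < 1 := by
  have hQ := one_sub_sq_mul_sin_sq_pos (pow_lt_one₀ hk0 hk1 two_ne_zero) x
  have : 0 < 1 - landenSin k x ^ 2 := by
    rw [one_sub_landenSin_sq hk0]
    positivity
  linarith

lemma sqrt_one_sub_landenSin_sq (hk0 : 0 ≤ k) (hk1 : k < 1) (hx : 0 ≤ cos x) :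
    √(1 - landenSin k x ^ 2) = cos x * √(1 - k ^ 2 * sin x ^ 2) / (1 + k * sin x ^ 2) := by
  have hD := one_add_mul_sin_sq_pos hk0 x
  have hQ := one_sub_sq_mul_sin_sq_pos (pow_lt_one₀ hk0 hk1 two_ne_zero) x
  rw [one_sub_landenSin_sq hk0, sqrt_div' _ (by positivity), sqrt_mul' _ hQ.le,
    sqrt_sq hx, sqrt_sq hD.le]

lemma sq_landenModulus (hk : 0 ≤ k) : (2 * √k / (1 + k)) ^ 2 = 4 * k / (1 + k) ^ 2 := by
  rw [div_pow, mul_pow, sq_sqrt hk]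
  norm_num

lemma sq_landenModulus_lt_one (hk0 : 0 ≤ k) (hk1 : k < 1) : (2 * √k / (1 + k)) ^ 2 < 1 := by
  rw [sq_landenModulus hk0, div_lt_one (by positivity)]
  nlinarith

lemma one_sub_landenModulus_sq_mul_landenSin_sq (hk : 0 ≤ k) (x : ℝ) :
    1 - (2 * √k / (1 + k)) ^ 2 * landenSin k x ^ 2
      = ((1 - k * sin x ^ 2) / (1 + k * sin x ^ 2)) ^ 2 := by
  rw [sq_landenModulus hk, landenSin]
  field_simp
  ring

lemma hasDerivAt_landenAngle (hk0 : 0 ≤ k) (hk1 : k < 1) (hx : 0 < cos x) :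
    HasDerivAt (landenAngle k) (landenAngleDeriv k x) x := by
  have hD := one_add_mul_sin_sq_pos hk0 x
  obtain ⟨hs1, hs2⟩ :=
    abs_lt.mp ((sq_lt_one_iff_abs_lt_one _).mp (landenSin_sq_lt_one hk0 hk1 hx.ne'))
  have hsin : HasDerivAt (landenSin k)
      (((1 + k) * cos x * (1 + k * sin x ^ 2) - (1 + k) * sin x * (k * (2 * sin x * cos x)))
        / (1 + k * sin x ^ 2) ^ 2) x := by
    have hden : HasDerivAt (fun y => 1 + k * sin y ^ 2) (k * (2 * sin x * cos x)) x := by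
      simpa using (((hasDerivAt_sin x).pow 2).const_mul k).const_add 1
    exact ((hasDerivAt_sin x).const_mul (1 + k)).div hden hD.ne'
  refine ((hasDerivAt_arcsin hs1.ne' hs2.ne).comp x hsin).congr_deriv ?_
  rw [sqrt_one_sub_landenSin_sq hk0 hk1 hx.le, landenAngleDeriv]
  field_simp
  ring

lemma landenAngleDeriv_mul_integrand (hk0 : 0 ≤ k) (hk1 : k < 1) (x : ℝ) :
    landenAngleDeriv k x * (1 / √(1 - (2 * √k / (1 + k)) ^ 2 * sin (landenAngle k x) ^ 2))
      = (1 + k) * (1 / √(1 - k ^ 2 * sin x ^ 2)) := by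
  have hN := one_sub_mul_sin_sq_pos hk0 hk1 x
  obtain ⟨hs1, hs2⟩ :=
    abs_le.mp ((sq_le_one_iff_abs_le_one _).mp (landenSin_sq_le_one hk0 hk1 x))
  rw [landenAngle, sin_arcsin hs1 hs2, one_sub_landenModulus_sq_mul_landenSin_sq hk0,
    sqrt_sq (by positivity), landenAngleDeriv]
  field_simp

lemma landenAngle_zero (k : ℝ) : landenAngle k 0 = 0 := by
  simp [landenAngle, landenSin]

lemma landenAngle_pi_div_two (hk : 0 ≤ k) : landenAngle k (π / 2) = π / 2 := by
  have : 1 + k ≠ 0 := by positivity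
  simp [landenAngle, landenSin, this]

lemma continuous_landenAngle (hk : 0 ≤ k) : Continuous (landenAngle k) :=
  continuous_arcsin.comp <|
    Continuous.div (by fun_prop) (by fun_prop) fun x => (one_add_mul_sin_sq_pos hk x).ne'

lemma continuous_landenAngleDeriv (hk0 : 0 ≤ k) (hk1 : k < 1) :
    Continuous (landenAngleDeriv k) :=
  Continuous.div (by fun_prop) (by fun_prop) fun x =>
    (mul_pos (one_add_mul_sin_sq_pos hk0 x)
      (sqrt_pos.2 (one_sub_sq_mul_sin_sq_pos (pow_lt_one₀ hk0 hk1 two_ne_zero) x))).ne'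

theorem EK_landen (hk0 : 0 ≤ k) (hk1 : k < 1) :
    EK (2 * √k / (1 + k)) = (1 + k) * EK k := by
  have hsub := intervalIntegral.integral_deriv_smul_comp'' (a := 0) (b := π / 2)
    (continuous_landenAngle hk0).continuousOn
    (fun x hx => by
      rw [min_eq_left pi_div_two_pos.le, max_eq_right pi_div_two_pos.le] at hx
      have hcos : 0 < cos x := cos_pos_of_mem_Ioo ⟨by linarith [hx.1, pi_pos], hx.2⟩
      exact (hasDerivAt_landenAngle hk0 hk1 hcos).hasDerivWithinAt)
    (continuous_landenAngleDeriv hk0 hk1).continuousOn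
    (continuous_one_div_sqrt_one_sub_sq_mul_sin_sq (sq_landenModulus_lt_one hk0 hk1)).continuousOn
  rw [landenAngle_zero, landenAngle_pi_div_two hk0] at hsub
  simp only [Function.comp_apply, smul_eq_mul, landenAngleDeriv_mul_integrand hk0 hk1,
    intervalIntegral.integral_const_mul] at hsub
  rw [EK, ← hsub, EK]

lemma sqrt_three_sub_two_mul_sqrt_two : √(3 - 2 * √2) = √2 - 1 := by
  have h2 : √2 ^ 2 = 2 := sq_sqrt zero_le_two
  rw [show 3 - 2 * √2 = (√2 - 1) ^ 2 by linear_combination -h2]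
  exact sqrt_sq (by nlinarith [sqrt_nonneg 2])

lemma landenModulus_three_sub_two_mul_sqrt_two :
    2 * √(3 - 2 * √2) / (1 + (3 - 2 * √2)) = √2 / 2 := by
  have h2 : √2 ^ 2 = 2 := sq_sqrt zero_le_two
  rw [sqrt_three_sub_two_mul_sqrt_two, div_eq_div_iff (by nlinarith [sqrt_nonneg 2]) two_ne_zero]
  linear_combination 2 * h2

lemma sqrt_one_sub_sq_three_sub_two_mul_sqrt_two :
    √(1 - (3 - 2 * √2) ^ 2) = 2 * √(√2 / 2) / (1 + √2 / 2) := by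
  have h2 : √2 ^ 2 = 2 := sq_sqrt zero_le_two
  rw [← sqrt_sq (by positivity : 0 ≤ 2 * √(√2 / 2) / (1 + √2 / 2)),
    sq_landenModulus (by positivity)]
  congr 1
  rw [eq_div_iff (by positivity)]
  linear_combination (-√2 ^ 2 - √2 + 4) * h2

theorem EK'_special_value : EK' (3 - 2 * Real.sqrt 2) = 2 * EK (3 - 2 * Real.sqrt 2) := by
  have h2 : √2 ^ 2 = 2 := sq_sqrt zero_le_two
  have hr0 : 0 ≤ 3 - 2 * √2 := by nlinarith [sqrt_nonneg 2]
  have hr1 : 3 - 2 * √2 < 1 := by nlinarith [sqrt_nonneg 2]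
  have hs1 : √2 / 2 < 1 := by nlinarith [sqrt_nonneg 2]
  have hK := EK_landen hr0 hr1
  rw [landenModulus_three_sub_two_mul_sqrt_two] at hK
  rw [EK', sqrt_one_sub_sq_three_sub_two_mul_sqrt_two, EK_landen (by positivity) hs1, hK,
    ← mul_assoc]
  congr 1
  linear_combination -h2
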